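/- Let φ be a monotone 1-in-3 SAT instance with n variables and m clauses in which every variable occurs in at least one clause, and let G_φ be the associated classified matching instance. Then G_φ admits a matching that is popular among all feasible matchings if and only if φ has a 1-in-3 satisfying assignment. -/

import Mathlib

open scoped Classical

/-- Applicants of the instance `G_φ`: `av i = aᵢ`, `bv i = bᵢ`,
`ac i j = a_{ij}` and `bc i j = b_{ij}` (the latter two meaningful when `i ∈ C_j`). -/
inductive App (n m : ℕ) where
  | av (i : Fin n) : App n m
  | bv (i : Fin n) : App n m
  | ac (i : Fin n) (j : Fin m) : App n m
  | bc (i : Fin n) (j : Fin m) : App n m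
  deriving DecidableEq, Fintype

/-- Posts of the instance `G_φ`: `pv i = pᵢ`, `pt i = pᵢᵗ`, `pf i = pᵢᶠ`
and `pc j = pⱼᶜ`. -/
inductive Post (n m : ℕ) where
  | pv (i : Fin n) : Post n m
  | pt (i : Fin n) : Post n m
  | pf (i : Fin n) : Post n m
  | pc (j : Fin m) : Post n m
  deriving DecidableEq, Fintype

namespace Red

variable {n m : ℕ}

/-- The rank-1 (first-choice) post of each applicant. -/
def rank1 : App n m → Post n m
  | .av i => .pv i
  | .bv i => .pv i
  | .ac _ j => .pc j
  | .bc _ j => .pc j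

/-- The rank-2 (second-choice) post of each applicant. -/
def rank2 : App n m → Post n m
  | .av i => .pt i
  | .bv i => .pf i
  | .ac i _ => .pt i
  | .bc i _ => .pf i

/-- The rank of a post on an applicant's preference list (3 = unacceptable). -/
def rk (x : App n m) (p : Post n m) : ℕ :=
  if p = rank1 x then 1 else if p = rank2 x then 2 else 3

/-- Only pairs `(i, j)` with `i ∈ C_j` give rise to applicants `a_{ij}`, `b_{ij}`. -/
def Valid (Cl : Fin m → Finset (Fin n)) : App n m → Prop
  | .av _ => True
  | .bv _ => True
  | .ac i j => i ∈ Cl j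
  | .bc i j => i ∈ Cl j

/-- `k_i`: the number of clauses containing variable `i`. -/
def occ (Cl : Fin m → Finset (Fin n)) (i : Fin n) : ℕ :=
  (Finset.univ.filter fun j => i ∈ Cl j).card

/-- `M` is a matching of `G_φ`: each (existing) applicant is assigned to at most one
post on its preference list. -/
def IsMatching (Cl : Fin m → Finset (Fin n)) (M : App n m → Option (Post n m)) : Prop :=
  ∀ x p, M x = some p → Valid Cl x ∧ (p = rank1 x ∨ p = rank2 x)

/-- The number of applicants matched to post `p`. -/
def cnt (M : App n m → Option (Post n m)) (p : Post n m) : ℕ :=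
  (Finset.univ.filter fun x => M x = some p).card

/-- `M` is feasible: all post quotas and all class quotas of `G_φ` are respected. -/
def Feasible (Cl : Fin m → Finset (Fin n)) (M : App n m → Option (Post n m)) : Prop :=
  -- post `pᵢ` has quota 1 and no classes
  (∀ i, cnt M (.pv i) ≤ 1) ∧
  -- post `pⱼᶜ` has quota 3
  (∀ j, cnt M (.pc j) ≤ 3) ∧
  -- class `S_{ij} = {a_{ij}, b_{ij}}` of `pⱼᶜ`, quota 1
  (∀ j, ∀ i ∈ Cl j,
    (({App.ac i j, App.bc i j} : Finset (App n m)).filter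
      fun x => M x = some (.pc j)).card ≤ 1) ∧
  -- class `S_{1j} = {a_{ij} : i ∈ C_j}` of `pⱼᶜ`, quota 1
  (∀ j, ((Cl j).filter fun i => M (.ac i j) = some (.pc j)).card ≤ 1) ∧
  -- class `S_{2j} = {b_{ij} : i ∈ C_j}` of `pⱼᶜ`, quota 2
  (∀ j, ((Cl j).filter fun i => M (.bc i j) = some (.pc j)).card ≤ 2) ∧
  -- post `pᵢᵗ` has quota `k_i`
  (∀ i, cnt M (.pt i) ≤ occ Cl i) ∧
  -- class `Sⱼᵗ = {a_{ij}, aᵢ}` of `pᵢᵗ`, quota 1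
  (∀ i, ∀ j, i ∈ Cl j →
    (({App.ac i j, App.av i} : Finset (App n m)).filter
      fun x => M x = some (.pt i)).card ≤ 1) ∧
  -- post `pᵢᶠ` has quota `k_i`
  (∀ i, cnt M (.pf i) ≤ occ Cl i) ∧
  -- class `Sⱼᶠ = {b_{ij}, bᵢ}` of `pᵢᶠ`, quota 1
  (∀ i, ∀ j, i ∈ Cl j →
    (({App.bc i j, App.bv i} : Finset (App n m)).filter
      fun x => M x = some (.pf i)).card ≤ 1)

/-- Applicant `x` prefers matching `M` to matching `M'`. -/
def Prefers (M M' : App n m → Option (Post n m)) (x : App n m) : Prop :=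
  ∃ p, M x = some p ∧ (M' x = none ∨ ∃ p', M' x = some p' ∧ rk x p < rk x p')

/-- `M'` is more popular than `M`. -/
def MorePopular (M' M : App n m → Option (Post n m)) : Prop :=
  (Finset.univ.filter fun x => Prefers M M' x).card <
    (Finset.univ.filter fun x => Prefers M' M x).card

/-- `M` is popular among all feasible matchings of `G_φ`. -/
def Popular (Cl : Fin m → Finset (Fin n)) (M : App n m → Option (Post n m)) : Prop :=
  IsMatching Cl M ∧ Feasible Cl M ∧
    ∀ M', IsMatching Cl M' → Feasible Cl M' → ¬ MorePopular M' M

/-- `φ` has a 1-in-3 satisfying assignment. -/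
def OneInThree (Cl : Fin m → Finset (Fin n)) : Prop :=
  ∃ η : Fin n → Bool, ∀ j, ((Cl j).filter fun i => η i = true).card = 1

end Red

/-!
A feasible matching of `G_φ` is determined by the rank `r x ∈ {1, 2, 3}` of the post it gives
each applicant (`3` meaning unmatched), and every quota becomes a conflict: partners `aᵢ, bᵢ`
(or `a_{ij}, b_{ij}`) cannot both get their first choice, `a_{ij}` and `aᵢ` (or `b_{ij}` and `bᵢ`)
cannot both get their second one, and `pⱼᶜ` takes at most one `a_{ij}` and two `b_{ij}`.

Given a 1-in-3 assignment `η`, let `bᵢ` and the `a_{ij}` get their first choice iff `η i`, and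
their partners `aᵢ`, `b_{ij}` the opposite. An applicant better off in another feasible matching gets its first choice
there, which its partner holds now; so the partner is worse off, and no matching is more popular.

Conversely, exchange arguments show that in a popular matching everybody is matched and exactly
one of any two partners gets its first choice; an unmatched `aᵢ` or `bᵢ` needs an exchange in all
clauses of `i` at once. Then `bᵢ` gets `pᵢ` iff `a_{ij}` gets `pⱼᶜ`, and in each clause exactly one
`a_{ij}` does, since the three `b_{ij}` cannot all take `pⱼᶜ`: so `bᵢ ∈ M(pᵢ)` is a 1-in-3
assignment.
-/

namespace Red

open Finset Function

theorem card_filter_pair_le_one_iff {α : Type*} [DecidableEq α] {x y : α} (hxy : x ≠ y)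
    (P : α → Prop) [DecidablePred P] :
    (({x, y} : Finset α).filter P).card ≤ 1 ↔ ¬ (P x ∧ P y) := by
  rw [filter_insert, filter_singleton]
  split_ifs <;> simp_all

variable {n m : ℕ} {Cl : Fin m → Finset (Fin n)}

def toMatching (r : App n m → ℕ) : App n m → Option (Post n m) := fun x =>
  if r x = 1 then some (rank1 x) else if r x = 2 then some (rank2 x) else none

def rankOf (M : App n m → Option (Post n m)) (x : App n m) : ℕ := (M x).elim 3 (rk x)

theorem rank1_ne_rank2 (x : App n m) : rank1 x ≠ rank2 x := by
  cases x <;> simp [rank1, rank2]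

theorem rk_rank1 (x : App n m) : rk x (rank1 x) = 1 := by simp [rk]

theorem rk_rank2 (x : App n m) : rk x (rank2 x) = 2 := by
  simp [rk, (rank1_ne_rank2 x).symm]

theorem toMatching_eq_some_iff {r : App n m → ℕ} {x : App n m} {p : Post n m} :
    toMatching r x = some p ↔ r x = 1 ∧ rank1 x = p ∨ r x = 2 ∧ rank2 x = p := by
  unfold toMatching
  split_ifs <;> simp_all

theorem rankOf_bounds (M : App n m → Option (Post n m)) (x : App n m) :
    1 ≤ rankOf M x ∧ rankOf M x ≤ 3 := by
  unfold rankOf rk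
  cases M x <;> simp only [Option.elim] <;> (try split_ifs) <;> omega

theorem toMatching_rankOf {M : App n m → Option (Post n m)} (hM : IsMatching Cl M) :
    toMatching (rankOf M) = M := by
  funext x
  rcases hx : M x with _ | p
  · simp [toMatching, rankOf, hx]
  · rcases (hM x p hx).2 with rfl | rfl
    · simp [toMatching, rankOf, hx, rk_rank1]
    · simp [toMatching, rankOf, hx, rk_rank2]

theorem prefers_toMatching_iff {r r' : App n m → ℕ} (hr : ∀ x, 1 ≤ r x ∧ r x ≤ 3)
    (hr' : ∀ x, 1 ≤ r' x ∧ r' x ≤ 3) (x : App n m) :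
    Prefers (toMatching r) (toMatching r') x ↔ r x < r' x := by
  have := hr x
  have := hr' x
  simp only [Prefers, toMatching]
  split_ifs <;> simp [rk_rank1, rk_rank2] <;> omega

/-- The rankings of the feasible matchings of `G_φ`; the quotas of the posts `pⱼᶜ`, `pᵢᵗ`, `pᵢᶠ`
are implied by those of their classes. -/
structure Admissible (Cl : Fin m → Finset (Fin n)) (r : App n m → ℕ) : Prop where
  bounds : ∀ x, 1 ≤ r x ∧ r x ≤ 3
  ac_mem : ∀ i j, r (.ac i j) ≠ 3 → i ∈ Cl j
  bc_mem : ∀ i j, r (.bc i j) ≠ 3 → i ∈ Cl j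
  pv : ∀ i, r (.av i) ≠ 1 ∨ r (.bv i) ≠ 1
  pc_pair : ∀ i j, r (.ac i j) ≠ 1 ∨ r (.bc i j) ≠ 1
  pc_ac : ∀ i i' j, r (.ac i j) = 1 → r (.ac i' j) = 1 → i = i'
  /-- the class `S_{2j}` has three members and quota 2 -/
  pc_bc : ∀ j, ∃ i ∈ Cl j, r (.bc i j) ≠ 1
  pt : ∀ i j, r (.ac i j) ≠ 2 ∨ r (.av i) ≠ 2
  pf : ∀ i j, r (.bc i j) ≠ 2 ∨ r (.bv i) ≠ 2

theorem Admissible.exists_bc_ne_one {r r' : App n m → ℕ} (hr : Admissible Cl r) {j : Fin m}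
    (h : ∀ i, r' (.bc i j) = 1 → r (.bc i j) = 1) : ∃ i ∈ Cl j, r' (.bc i j) ≠ 1 := by
  obtain ⟨i, hi, hne⟩ := hr.pc_bc j
  exact ⟨i, hi, mt (h i) hne⟩

def RankMorePopular (r' r : App n m → ℕ) : Prop :=
  #{x | r x < r' x} < #{x | r' x < r x}

def RankPopular (Cl : Fin m → Finset (Fin n)) (r : App n m → ℕ) : Prop :=
  Admissible Cl r ∧ ∀ r', Admissible Cl r' → ¬ RankMorePopular r' r

theorem morePopular_toMatching_iff {r r' : App n m → ℕ} (hr : ∀ x, 1 ≤ r x ∧ r x ≤ 3)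
    (hr' : ∀ x, 1 ≤ r' x ∧ r' x ≤ 3) :
    MorePopular (toMatching r') (toMatching r) ↔ RankMorePopular r' r := by
  simp only [MorePopular, RankMorePopular, prefers_toMatching_iff hr hr',
    prefers_toMatching_iff hr' hr]

section Feasibility

variable {r : App n m → ℕ}

theorem Admissible.isMatching (hr : Admissible Cl r) : IsMatching Cl (toMatching r) := by
  intro x p hx
  rw [toMatching_eq_some_iff] at hx
  refine ⟨?_, by grind⟩
  cases x
  · trivial
  · trivial
  · exact hr.ac_mem _ _ (by omega)
  · exact hr.bc_mem _ _ (by omega)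

theorem Admissible.cnt_pv_le_one (hr : Admissible Cl r) (i : Fin n) :
    cnt (toMatching r) (.pv i) ≤ 1 := by
  refine card_le_one.2 fun x hx y hy => ?_
  simp only [mem_filter, mem_univ, true_and, toMatching_eq_some_iff] at hx hy
  cases x <;> cases y <;> simp [rank1, rank2] at hx hy ⊢ <;> grind [hr.pv i]

theorem Admissible.cnt_pc_le_three (h3 : ∀ j, (Cl j).card = 3) (hr : Admissible Cl r)
    (j : Fin m) : cnt (toMatching r) (.pc j) ≤ 3 := by
  calc cnt (toMatching r) (.pc j)
      ≤ ((Cl j).image fun i => if r (.ac i j) = 1 then App.ac i j else .bc i j).card := by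
        refine card_le_card fun x hx => ?_
        simp only [mem_filter, mem_univ, true_and, toMatching_eq_some_iff] at hx
        simp only [mem_image]
        cases x with
        | av _ | bv _ => simp [rank1, rank2] at hx
        | ac i j' =>
          obtain ⟨hrx, rfl⟩ : r (.ac i j') = 1 ∧ j' = j := by simpa [rank1, rank2] using hx
          exact ⟨i, hr.ac_mem i j' (by omega), by simp [hrx]⟩
        | bc i j' =>
          obtain ⟨hrx, rfl⟩ : r (.bc i j') = 1 ∧ j' = j := by simpa [rank1, rank2] using hx
          exact ⟨i, hr.bc_mem i j' (by omega), by grind [hr.pc_pair i j']⟩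
    _ ≤ (Cl j).card := card_image_le
    _ = 3 := h3 j

theorem Admissible.cnt_pt_le_occ (hocc : ∀ i, ∃ j, i ∈ Cl j) (hr : Admissible Cl r)
    (i : Fin n) : cnt (toMatching r) (.pt i) ≤ occ Cl i := by
  calc cnt (toMatching r) (.pt i)
      ≤ (({j | i ∈ Cl j} : Finset _).image
          fun j => if r (.ac i j) = 2 then App.ac i j else .av i).card := by
        refine card_le_card fun x hx => ?_
        simp only [mem_filter, mem_univ, true_and, toMatching_eq_some_iff] at hx
        simp only [mem_image, mem_filter, mem_univ, true_and]
        cases x with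
        | av i' =>
          obtain ⟨hrx, rfl⟩ : r (.av i') = 2 ∧ i' = i := by simpa [rank1, rank2] using hx
          obtain ⟨j, hj⟩ := hocc i'
          exact ⟨j, hj, by grind [hr.pt i' j]⟩
        | ac i' j =>
          obtain ⟨hrx, rfl⟩ : r (.ac i' j) = 2 ∧ i' = i := by simpa [rank1, rank2] using hx
          exact ⟨j, hr.ac_mem i' j (by omega), by simp [hrx]⟩
        | bv _ | bc _ _ => simp [rank1, rank2] at hx
    _ ≤ occ Cl i := card_image_le

theorem Admissible.cnt_pf_le_occ (hocc : ∀ i, ∃ j, i ∈ Cl j) (hr : Admissible Cl r)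
    (i : Fin n) : cnt (toMatching r) (.pf i) ≤ occ Cl i := by
  calc cnt (toMatching r) (.pf i)
      ≤ (({j | i ∈ Cl j} : Finset _).image
          fun j => if r (.bc i j) = 2 then App.bc i j else .bv i).card := by
        refine card_le_card fun x hx => ?_
        simp only [mem_filter, mem_univ, true_and, toMatching_eq_some_iff] at hx
        simp only [mem_image, mem_filter, mem_univ, true_and]
        cases x with
        | bv i' =>
          obtain ⟨hrx, rfl⟩ : r (.bv i') = 2 ∧ i' = i := by simpa [rank1, rank2] using hx
          obtain ⟨j, hj⟩ := hocc i'
          exact ⟨j, hj, by grind [hr.pf i' j]⟩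
        | bc i' j =>
          obtain ⟨hrx, rfl⟩ : r (.bc i' j) = 2 ∧ i' = i := by simpa [rank1, rank2] using hx
          exact ⟨j, hr.bc_mem i' j (by omega), by simp [hrx]⟩
        | av _ | ac _ _ => simp [rank1, rank2] at hx
    _ ≤ occ Cl i := card_image_le

theorem Admissible.feasible (h3 : ∀ j, (Cl j).card = 3) (hocc : ∀ i, ∃ j, i ∈ Cl j)
    (hr : Admissible Cl r) : Feasible Cl (toMatching r) := by
  refine ⟨hr.cnt_pv_le_one, hr.cnt_pc_le_three h3, fun j i _ => ?_, fun j => ?_, fun j => ?_,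
    hr.cnt_pt_le_occ hocc, fun i j _ => ?_, hr.cnt_pf_le_occ hocc, fun i j _ => ?_⟩
  · rw [card_filter_pair_le_one_iff (by simp)]
    simpa [toMatching_eq_some_iff, rank1, rank2] using not_and_or.2 (hr.pc_pair i j)
  · refine card_le_one.2 fun i hi i' hi' => ?_
    simp [toMatching_eq_some_iff, rank1, rank2] at hi hi'
    exact hr.pc_ac i i' j hi.2 hi'.2
  · obtain ⟨i, hi, h⟩ := hr.pc_bc j
    have hlt : ((Cl j).filter fun i => toMatching r (.bc i j) = some (.pc j)).card < 3 :=
      h3 j ▸ card_lt_card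
        (filter_ssubset.2 ⟨i, hi, by simpa [toMatching_eq_some_iff, rank1, rank2]⟩)
    omega
  · rw [card_filter_pair_le_one_iff (by simp)]
    simpa [toMatching_eq_some_iff, rank1, rank2] using not_and_or.2 (hr.pt i j)
  · rw [card_filter_pair_le_one_iff (by simp)]
    simpa [toMatching_eq_some_iff, rank1, rank2] using not_and_or.2 (hr.pf i j)

theorem admissible_rankOf (h3 : ∀ j, (Cl j).card = 3) {M : App n m → Option (Post n m)}
    (hM : IsMatching Cl M) (hF : Feasible Cl M) : Admissible Cl (rankOf M) := by
  have hval (x : App n m) (hx : rankOf M x ≠ 3) : Valid Cl x := by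
    rcases h : M x with _ | p
    · simp [rankOf, h] at hx
    · exact (hM x p h).1
  have hpair {x y : App n m} (hxy : x ≠ y) (p : Post n m) :=
    card_filter_pair_le_one_iff (P := fun z => toMatching (rankOf M) z = some p) hxy
  rw [← toMatching_rankOf hM] at hF
  obtain ⟨hpv, -, hpc, hS1, hS2, -, hpt, -, hpf⟩ := hF
  refine ⟨rankOf_bounds M, fun i j => hval (.ac i j), fun i j => hval (.bc i j), fun i => ?_,
    fun i j => ?_, fun i i' j hi hi' => ?_, fun j => ?_, fun i j => ?_, fun i j => ?_⟩
  · by_contra! h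
    refine absurd (hpv i) (not_le.2 (one_lt_card.2 ⟨.av i, ?_, .bv i, ?_, by simp⟩)) <;>
      simp [toMatching_eq_some_iff, rank1, h]
  · by_contra! h
    have := (hpair (by simp) _).1 (hpc j i (hval (.ac i j) (by omega)))
    simp_all [toMatching_eq_some_iff, rank1, rank2]
  · by_contra hne
    have hmem {i₀ : Fin n} (h : rankOf M (.ac i₀ j) = 1) :
        i₀ ∈ (Cl j).filter fun i => toMatching (rankOf M) (.ac i j) = some (.pc j) :=
      mem_filter.2 ⟨hval (.ac i₀ j) (by omega), by simp [toMatching_eq_some_iff, rank1, h]⟩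
    exact absurd (hS1 j) (not_le.2 (one_lt_card.2 ⟨i, hmem hi, i', hmem hi', hne⟩))
  · by_contra! h
    have := hS2 j
    rw [filter_true_of_mem fun i hi => by simp [toMatching_eq_some_iff, rank1, h i hi],
      h3 j] at this
    omega
  · by_contra! h
    have := (hpair (by simp) _).1 (hpt i j (hval (.ac i j) (by omega)))
    simp_all [toMatching_eq_some_iff, rank1, rank2]
  · by_contra! h
    have := (hpair (by simp) _).1 (hpf i j (hval (.bc i j) (by omega)))
    simp_all [toMatching_eq_some_iff, rank1, rank2]

end Feasibility

theorem exists_popular_iff_exists_rankPopular (h3 : ∀ j, (Cl j).card = 3)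
    (hocc : ∀ i, ∃ j, i ∈ Cl j) :
    (∃ M, Popular Cl M) ↔ ∃ r, RankPopular Cl r := by
  constructor
  · rintro ⟨M, hM, hF, hpop⟩
    have hr := admissible_rankOf h3 hM hF
    refine ⟨rankOf M, hr, fun r' hr' h => hpop _ hr'.isMatching (hr'.feasible h3 hocc) ?_⟩
    rwa [← toMatching_rankOf hM, morePopular_toMatching_iff hr.bounds hr'.bounds]
  · rintro ⟨r, hr, hpop⟩
    refine ⟨toMatching r, hr.isMatching, hr.feasible h3 hocc, fun M hM hF h => ?_⟩
    have hr' := admissible_rankOf h3 hM hF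
    rw [← toMatching_rankOf hM, morePopular_toMatching_iff hr.bounds hr'.bounds] at h
    exact hpop _ hr' h

def partner : App n m → App n m
  | .av i => .bv i
  | .bv i => .av i
  | .ac i j => .bc i j
  | .bc i j => .ac i j

theorem partner_partner (x : App n m) : partner (partner x) = x := by cases x <;> rfl

theorem partner_injective : Injective (partner : App n m → App n m) :=
  LeftInverse.injective partner_partner

theorem partner_ne (x : App n m) : partner x ≠ x := by cases x <;> simp [partner]

theorem not_rankMorePopular_of_partner {r r' : App n m → ℕ}
    (h : ∀ x, r' x < r x → r (partner x) < r' (partner x)) : ¬ RankMorePopular r' r := by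
  refine not_lt.2 (card_le_card_of_injOn partner (fun x hx => ?_) partner_injective.injOn)
  simpa using h x (by simpa using hx)

theorem rankMorePopular_of_partner {r r' : App n m → ℕ} {y : App n m}
    (hlose : ∀ x, r x < r' x → r' (partner x) < r (partner x)) (hy : r' y < r y)
    (hy' : ¬ r (partner y) < r' (partner y)) : RankMorePopular r' r := by
  calc #{x | r x < r' x} ≤ #(({x | r' x < r x} : Finset _).erase y) := by
        refine card_le_card_of_injOn partner (fun x hx => ?_) partner_injective.injOn
        replace hx : r x < r' x := by simpa using hx
        refine mem_erase.2 ⟨?_, by simpa using hlose x hx⟩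
        rintro rfl
        exact hy' (by rwa [partner_partner])
    _ < #{x | r' x < r x} := card_erase_lt_of_mem (by simpa using hy)

theorem rankMorePopular_update {r : App n m → ℕ} {y : App n m} {v : ℕ} (hv : v < r y) :
    RankMorePopular (update r y v) r := by
  refine rankMorePopular_of_partner (y := y) (fun x hx => ?_) (by simpa using hv)
    (by simp [update_of_ne (partner_ne y)])
  obtain rfl | hxy := eq_or_ne x y
  · simp at hx; omega
  · simp [update_of_ne hxy] at hx

def ofAssignment (Cl : Fin m → Finset (Fin n)) (η : Fin n → Bool) : App n m → ℕ
  | .av i => if η i then 2 else 1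
  | .bv i => if η i then 1 else 2
  | .ac i j => if i ∈ Cl j then (if η i then 1 else 2) else 3
  | .bc i j => if i ∈ Cl j then (if η i then 2 else 1) else 3

theorem admissible_ofAssignment {η : Fin n → Bool}
    (hη : ∀ j, ((Cl j).filter fun i => η i = true).card = 1) :
    Admissible Cl (ofAssignment Cl η) := by
  constructor
  case bounds => intro x; cases x <;> simp only [ofAssignment] <;> grind
  case pc_ac =>
    intro i i' j hi hi'
    simp only [ofAssignment] at hi hi'
    exact card_le_one.1 (hη j).le i (by simp; grind) i' (by simp; grind)
  case pc_bc =>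
    intro j
    obtain ⟨i, hi⟩ := card_pos.1 (by rw [hη j]; norm_num : 0 < ((Cl j).filter fun i => η i).card)
    simp only [mem_filter] at hi
    exact ⟨i, hi.1, by simp [ofAssignment, hi.1, hi.2]⟩
  all_goals simp only [ofAssignment]; grind

theorem rankPopular_ofAssignment {η : Fin n → Bool}
    (hη : ∀ j, ((Cl j).filter fun i => η i = true).card = 1) :
    RankPopular Cl (ofAssignment Cl η) := by
  refine ⟨admissible_ofAssignment hη, fun r' hr' => not_rankMorePopular_of_partner fun x hx => ?_⟩
  -- `x` gets its first choice in `r'`, which its partner holds in `ofAssignment Cl η`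
  obtain ⟨⟩ := hr'
  cases x <;> simp only [ofAssignment, partner] at hx ⊢ <;> grind

section Popular

variable {r : App n m → ℕ}

theorem RankPopular.av_eq_one_or_bv_eq_one (hr : RankPopular Cl r) (i : Fin n) :
    r (.av i) = 1 ∨ r (.bv i) = 1 := by
  by_contra! h
  have hpos := (hr.1.bounds (.av i)).1
  refine hr.2 (update r (.av i) 1) ?_ (rankMorePopular_update (by omega))
  obtain ⟨⟩ := hr.1
  constructor
  case pc_bc => exact fun _ => hr.1.exists_bc_ne_one fun _ => by simp
  all_goals simp only [update_apply]; grind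

theorem RankPopular.ac_ne_three (hr : RankPopular Cl r) {i : Fin n} {j : Fin m}
    (hij : i ∈ Cl j) : r (.ac i j) ≠ 3 := by
  intro hac
  have hpv := hr.av_eq_one_or_bv_eq_one i
  obtain ⟨⟩ := hr.1
  by_cases hav : r (.av i) = 2
  · let r' := update (update (update r (.ac i j) 2) (.av i) 1) (.bv i) 3
    refine hr.2 r' ?_ (rankMorePopular_of_partner (y := .ac i j) ?_ ?_ ?_)
    · constructor
      case pc_bc => exact fun _ => hr.1.exists_bc_ne_one fun _ => by simp [r']
      all_goals simp only [r', update_apply]; grind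
    · intro x hx
      simp only [r', update_apply] at hx ⊢
      split_ifs at hx ⊢ <;> subst_vars <;> simp_all [partner]
    · simp [r']; omega
    · simp [r', partner]
  · refine hr.2 (update r (.ac i j) 2) ?_ (rankMorePopular_update (by omega))
    constructor
    case pc_bc => exact fun _ => hr.1.exists_bc_ne_one fun _ => by simp
    all_goals simp only [update_apply]; grind

theorem RankPopular.bc_ne_three (hr : RankPopular Cl r) {i : Fin n} {j : Fin m}
    (hij : i ∈ Cl j) : r (.bc i j) ≠ 3 := by
  intro hbc
  have hpv := hr.av_eq_one_or_bv_eq_one i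
  obtain ⟨⟩ := hr.1
  by_cases hbv : r (.bv i) = 2
  · let r' := update (update (update r (.bc i j) 2) (.bv i) 1) (.av i) 3
    refine hr.2 r' ?_ (rankMorePopular_of_partner (y := .bc i j) ?_ ?_ ?_)
    · constructor
      case pc_bc => exact fun _ => hr.1.exists_bc_ne_one fun _ => by grind [update_apply]
      all_goals simp only [r', update_apply]; grind
    · intro x hx
      simp only [r', update_apply] at hx ⊢
      split_ifs at hx ⊢ <;> subst_vars <;> simp_all [partner]
    · simp [r']; omega
    · simp [r', partner]
  · refine hr.2 (update r (.bc i j) 2) ?_ (rankMorePopular_update (by omega))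
    constructor
    case pc_bc => exact fun _ => hr.1.exists_bc_ne_one fun _ => by grind [update_apply]
    all_goals simp only [update_apply]; grind

theorem RankPopular.ac_add_bc (hr : RankPopular Cl r) {i : Fin n} {j : Fin m}
    (hij : i ∈ Cl j) : r (.ac i j) + r (.bc i j) = 3 := by
  have hac := hr.ac_ne_three hij
  have hbc := hr.bc_ne_three hij
  obtain ⟨⟩ := hr.1
  suffices ¬ (r (.ac i j) = 2 ∧ r (.bc i j) = 2) by grind
  rintro ⟨hac, hbc⟩
  by_cases h : ∃ i', r (.ac i' j) = 1
  · obtain ⟨i', hi'⟩ := h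
    refine hr.2 (update r (.bc i j) 1) ?_ (rankMorePopular_update (by omega))
    constructor
    case pc_bc =>
      intro j'
      obtain rfl | hj' := eq_or_ne j' j
      · exact ⟨i', by grind, by grind⟩
      · exact hr.1.exists_bc_ne_one fun _ => by grind [update_apply]
    all_goals simp only [update_apply]; grind
  · simp only [not_exists] at h
    refine hr.2 (update r (.ac i j) 1) ?_ (rankMorePopular_update (by omega))
    constructor
    case pc_bc => exact fun _ => hr.1.exists_bc_ne_one fun _ => by simp
    all_goals simp only [update_apply]; grind

theorem RankPopular.exists_ac_eq_one (hr : RankPopular Cl r) (j : Fin m) :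
    ∃ i, r (.ac i j) = 1 := by
  by_contra! h
  obtain ⟨i, hi, hbc⟩ := hr.1.pc_bc j
  have := hr.ac_add_bc hi
  have := (hr.1.bounds (.bc i j)).1
  have := (hr.1.bounds (.ac i j)).1
  grind

/-- Gives an unmatched `bᵢ` the post `pᵢᶠ`. Each `b_{ij}` there moves to `pⱼᶜ`, displacing `a_{ij}`
to `pᵢᵗ`; to keep the class `S_{2j}` within its quota, `a_{H j, j}` replaces `b_{H j, j}` at `pⱼᶜ`,
and `b_{H j, j}` is left unmatched. -/
def repairBv (r : App n m → ℕ) (i : Fin n) (H : Fin m → Fin n) : App n m → ℕ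
  | .av i₀ => r (.av i₀)
  | .bv i₀ => if i₀ = i then 2 else r (.bv i₀)
  | .ac i₀ j => if r (.bc i j) = 2 ∧ i₀ = i then 2
      else if r (.bc i j) = 2 ∧ i₀ = H j then 1 else r (.ac i₀ j)
  | .bc i₀ j => if r (.bc i j) = 2 ∧ i₀ = i then 1
      else if r (.bc i j) = 2 ∧ i₀ = H j then 3 else r (.bc i₀ j)

theorem RankPopular.bv_ne_three (h3 : ∀ j, (Cl j).card = 3) (hr : RankPopular Cl r)
    (i : Fin n) : r (.bv i) ≠ 3 := by
  intro hbv
  have hav : r (.av i) = 1 := by grind [hr.av_eq_one_or_bv_eq_one i]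
  choose H hH hHi using fun j => exists_mem_ne (by rw [h3 j]; norm_num : 1 < (Cl j).card) i
  have key : ∀ j, r (.bc i j) = 2 →
      r (.ac i j) = 1 ∧ r (.ac (H j) j) = 2 ∧ r (.bc (H j) j) = 1 := by
    intro j hj
    have := hr.ac_add_bc (hr.1.bc_mem i j (by omega))
    have := hr.ac_add_bc (hH j)
    have := hr.1.pc_ac i (H j) j
    have := (hr.1.bounds (.ac (H j) j)).1
    have := (hr.1.bounds (.bc (H j) j)).1
    grind
  obtain ⟨⟩ := hr.1
  refine hr.2 (repairBv r i H) ?_ (rankMorePopular_of_partner (y := .bv i) ?_ ?_ ?_)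
  · constructor
    case bounds => intro x; cases x <;> simp only [repairBv] <;> grind
    case pc_bc =>
      intro j
      by_cases hj : r (.bc i j) = 2
      · exact ⟨H j, hH j, by simp [repairBv, hj, hHi j]⟩
      · exact hr.1.exists_bc_ne_one fun _ => by simp [repairBv, hj]
    all_goals simp only [repairBv]; grind
  · intro x hx
    cases x <;> simp only [repairBv, partner] at hx ⊢ <;> grind
  · simp [repairBv]; omega
  · simp [repairBv, partner]

/-- Gives an unmatched `aᵢ` the post `pᵢᵗ`. Each `a_{ij}` there moves to `pⱼᶜ`, displacing `b_{ij}`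
to `pᵢᶠ`; as `S_{1j}` has quota 1, the `a_{H j, j}` already at `pⱼᶜ` is left unmatched, and
`b_{H j, j}` takes its place. -/
def repairAv (r : App n m → ℕ) (i : Fin n) (H : Fin m → Fin n) : App n m → ℕ
  | .av i₀ => if i₀ = i then 2 else r (.av i₀)
  | .bv i₀ => r (.bv i₀)
  | .ac i₀ j => if r (.ac i j) = 2 ∧ i₀ = i then 1
      else if r (.ac i j) = 2 ∧ i₀ = H j then 3 else r (.ac i₀ j)
  | .bc i₀ j => if r (.ac i j) = 2 ∧ i₀ = i then 2
      else if r (.ac i j) = 2 ∧ i₀ = H j then 1 else r (.bc i₀ j)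

theorem RankPopular.av_ne_three (hr : RankPopular Cl r) (i : Fin n) : r (.av i) ≠ 3 := by
  intro hav
  have hbv : r (.bv i) = 1 := by grind [hr.av_eq_one_or_bv_eq_one i]
  choose H hH using hr.exists_ac_eq_one
  have key : ∀ j, r (.ac i j) = 2 →
      H j ≠ i ∧ r (.bc i j) = 1 ∧ r (.bc (H j) j) = 2 ∧ H j ∈ Cl j := by
    intro j hj
    have hHj : H j ∈ Cl j := hr.1.ac_mem (H j) j (by have := hH j; omega)
    have := hr.ac_add_bc (hr.1.ac_mem i j (by omega))
    have := hr.ac_add_bc hHj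
    have := (hr.1.bounds (.bc i j)).1
    have := (hr.1.bounds (.bc (H j) j)).1
    grind
  obtain ⟨⟩ := hr.1
  refine hr.2 (repairAv r i H) ?_ (rankMorePopular_of_partner (y := .av i) ?_ ?_ ?_)
  · constructor
    case bounds => intro x; cases x <;> simp only [repairAv] <;> grind
    case pc_bc =>
      intro j
      by_cases hj : r (.ac i j) = 2
      · exact ⟨i, by grind, by simp [repairAv, hj]⟩
      · exact hr.1.exists_bc_ne_one fun _ => by simp [repairAv, hj]
    all_goals simp only [repairAv]; grind
  · intro x hx
    cases x <;> simp only [repairAv, partner] at hx ⊢ <;> grind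
  · simp [repairAv]; omega
  · simp [repairAv, partner]

theorem RankPopular.av_add_bv (h3 : ∀ j, (Cl j).card = 3) (hr : RankPopular Cl r)
    (i : Fin n) : r (.av i) + r (.bv i) = 3 := by
  have := hr.av_eq_one_or_bv_eq_one i
  have := hr.av_ne_three i
  have := hr.bv_ne_three h3 i
  obtain ⟨⟩ := hr.1
  grind

theorem RankPopular.bv_eq_one_iff (h3 : ∀ j, (Cl j).card = 3) (hr : RankPopular Cl r)
    {i : Fin n} {j : Fin m} (hij : i ∈ Cl j) : r (.bv i) = 1 ↔ r (.ac i j) = 1 := by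
  have := hr.av_add_bv h3 i
  have := hr.ac_add_bc hij
  obtain ⟨⟩ := hr.1
  grind

theorem RankPopular.oneInThree (h3 : ∀ j, (Cl j).card = 3) (hr : RankPopular Cl r) :
    OneInThree Cl := by
  refine ⟨fun i => decide (r (.bv i) = 1), fun j => card_eq_one.2 ?_⟩
  obtain ⟨i, hi⟩ := hr.exists_ac_eq_one j
  have hij : i ∈ Cl j := hr.1.ac_mem i j (by omega)
  refine ⟨i, ext fun i' => ?_⟩
  simp only [mem_filter, mem_singleton, decide_eq_true_eq]
  constructor
  · rintro ⟨hi', h⟩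
    exact hr.1.pc_ac _ _ j ((hr.bv_eq_one_iff h3 hi').1 h) hi
  · rintro rfl
    exact ⟨hij, (hr.bv_eq_one_iff h3 hij).2 hi⟩

end Popular

theorem exists_rankPopular_iff (h3 : ∀ j, (Cl j).card = 3) :
    (∃ r, RankPopular Cl r) ↔ OneInThree Cl :=
  ⟨fun ⟨_, hr⟩ => hr.oneInThree h3, fun ⟨_, hη⟩ => ⟨_, rankPopular_ofAssignment hη⟩⟩

end Red

/-- for a monotone 1-in-3 SAT instance `φ` (clauses of size exactly 3,
every variable occurring in some clause), the instance `G_φ` admits a matching that is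
popular among all feasible matchings iff `φ` has a 1-in-3 satisfying assignment. -/
theorem stmt15 (n m : ℕ) (Cl : Fin m → Finset (Fin n))
    (h3 : ∀ j, (Cl j).card = 3) (hocc : ∀ i, ∃ j, i ∈ Cl j) :
    (∃ M : App n m → Option (Post n m), Red.Popular Cl M) ↔ Red.OneInThree Cl :=
  (Red.exists_popular_iff_exists_rankPopular h3 hocc).trans (Red.exists_rankPopular_iff h3)
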